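/- arXiv:2509.24279 — 4 statements merged into one kernel-verified Lean document; each statement's English description precedes it below -/
import Mathlib

section
/- For x in the unit simplex S_n and d > 0, the intersection S_n ∩ S(x,d) equals the simplex ball S(x̂, d̂), where d̂ = (1/n)·∑_{i=1}^n min{d, x_i} and x̂_i = max{x_i, d} + d̂ − d for each i. -/
open InnerProductSpace Finset

noncomputable section

abbrev Euc (n : ℕ) := EuclideanSpace ℝ (Fin n)

/-- The all-ones vector. -/
def ones (n : ℕ) : Euc n := WithLp.toLp 2 (fun _ => 1)

/-- The unit simplex. -/
def unitSimplex (n : ℕ) : Set (Euc n) := {x | (∀ i, 0 ≤ x i) ∧ ∑ i, x i = 1}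

/-- The simplex ball. -/
def simplexBall (n : ℕ) (x : Euc n) (d : ℝ) : Set (Euc n) :=
  {y | ∃ l ∈ unitSimplex n, y = (x - d • ones n) + ((n : ℝ) * d) • l}

/-! A simplex ball `S(x, d)` is cut out of the hyperplane `∑ yᵢ = ∑ xᵢ` by the half-spaces
`yᵢ ≥ xᵢ - d`. Intersecting with the unit simplex just raises each lower bound to
`max (xᵢ - d) 0 = max xᵢ d - d`, so the intersection is again of this form; matching the lower
bounds `x̂ᵢ - d̂ = max xᵢ d - d` and the sums `∑ x̂ᵢ = 1` determines `x̂` and `d̂`, and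
`max a d + min d a = a + d` turns the latter into the formula for `d̂`. -/

lemma simplexBall_eq {n : ℕ} (hn : 0 < n) (x : Euc n) {d : ℝ} (hd : 0 < d) :
    simplexBall n x d = {y | (∀ i, x i - d ≤ y i) ∧ ∑ i, y i = ∑ i, x i} := by
  have hnd : (n : ℝ) * d ≠ 0 := by positivity
  ext y
  constructor
  · rintro ⟨l, ⟨hl₀, hl₁⟩, rfl⟩
    have hcoord : ∀ i, (x - d • ones n + ((n : ℝ) * d) • l) i = x i - d + n * d * l i := by
      simp [ones]
    refine ⟨fun i => ?_, ?_⟩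
    · rw [hcoord]
      have := hl₀ i
      exact le_add_of_nonneg_right (by positivity)
    · simp only [hcoord, sum_add_distrib, sum_sub_distrib, ← mul_sum, hl₁]
      simp
  · rintro ⟨hy, hsum⟩
    refine ⟨WithLp.toLp 2 (fun i => (y i - x i + d) / (n * d)), ⟨fun i => ?_, ?_⟩, ?_⟩
    · have := hy i
      exact div_nonneg (by linarith) (by positivity)
    · simp only [← sum_div, sum_add_distrib, sum_sub_distrib, hsum]
      simp [hnd]
    · ext i
      simp only [ones, PiLp.add_apply, PiLp.sub_apply, PiLp.smul_apply, smul_eq_mul]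
      field_simp
      ring

lemma pos_of_mem_unitSimplex {n : ℕ} {x : Euc n} (hx : x ∈ unitSimplex n) : 0 < n := by
  rcases Nat.eq_zero_or_pos n with rfl | hn
  · simpa using hx.2
  · exact hn

lemma sum_min_pos_of_mem_unitSimplex {n : ℕ} {x : Euc n} (hx : x ∈ unitSimplex n) {d : ℝ}
    (hd : 0 < d) : 0 < ∑ i, min d (x i) := by
  obtain ⟨j, -, hj⟩ : ∃ j ∈ univ, (0 : ℝ) < x j :=
    exists_lt_of_sum_lt (by simp [hx.2])
  exact sum_pos' (fun i _ => le_min hd.le (hx.1 i)) ⟨j, mem_univ j, lt_min hd hj⟩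

lemma sum_max_add_sum_min {ι : Type*} [Fintype ι] (f : ι → ℝ) (d : ℝ) :
    ∑ i, max (f i) d + ∑ i, min d (f i) = ∑ i, f i + Fintype.card ι * d := by
  calc ∑ i, max (f i) d + ∑ i, min d (f i) = ∑ i, (f i + d) := by
        rw [← sum_add_distrib]
        congr! 1 with i
        rw [min_comm, max_add_min]
    _ = ∑ i, f i + Fintype.card ι * d := by simp [sum_add_distrib]

lemma unitSimplex_inter_halfspaces {n : ℕ} {x : Euc n} (hx : ∑ i, x i = 1) (d : ℝ) :
    unitSimplex n ∩ {y | (∀ i, x i - d ≤ y i) ∧ ∑ i, y i = ∑ i, x i} =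
      {y | (∀ i, max (x i) d - d ≤ y i) ∧ ∑ i, y i = 1} := by
  ext y
  simp only [unitSimplex, Set.mem_inter_iff, Set.mem_ofPred_eq, hx, sub_le_iff_le_add,
    max_le_iff, le_add_iff_nonneg_left, forall_and]
  tauto

theorem unitSimplex_inter_simplexBall (n : ℕ) (x : Euc n) (hx : x ∈ unitSimplex n)
    (d : ℝ) (hd : 0 < d) :
    unitSimplex n ∩ simplexBall n x d =
      simplexBall n (WithLp.toLp 2 (fun i => max (x i) d + (∑ j, min d (x j)) / n - d))
        ((∑ j, min d (x j)) / n) := by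
  have hn := pos_of_mem_unitSimplex hx
  have hr : 0 < (∑ j, min d (x j)) / n :=
    div_pos (sum_min_pos_of_mem_unitSimplex hx hd) (by positivity)
  have hsum : ∑ i, (max (x i) d + (∑ j, min d (x j)) / n - d) = 1 := by
    have := sum_max_add_sum_min x d
    simp only [sum_sub_distrib, sum_add_distrib, sum_const, card_univ, Fintype.card_fin,
      nsmul_eq_mul] at this ⊢
    field_simp
    linarith [hx.2]
  rw [simplexBall_eq hn x hd, simplexBall_eq hn _ hr, unitSimplex_inter_halfspaces hx.2,
    hsum]
  simp only [add_sub_right_comm _ _ d, add_sub_cancel_right]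
end
end

section
/- Let x ∈ S_n and d > 0. For any y ∈ S_n with ‖x − y‖₂ ≤ d, it holds that y ∈ S(x,d). -/
/-! For `n d > 0`, `S(x, d)` is the set of points `y` of the hyperplane `∑ yᵢ = ∑ xᵢ` with
`yᵢ ≥ xᵢ - d` for all `i` (take `λ = (y - x + d𝟙) / (n d)`). A point `y` of the simplex has the same
coordinate sum as `x`, and `xᵢ - yᵢ ≤ ‖x - y‖₂ ≤ d`. -/

open InnerProductSpace Finset

noncomputable section

lemma mem_simplexBall_iff {n : ℕ} (hn : 0 < n) {d : ℝ} (hd : 0 < d) {x y : Euc n} :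
    y ∈ simplexBall n x d ↔ (∀ i, x i - d ≤ y i) ∧ ∑ i, y i = ∑ i, x i := by
  have hnd : (0 : ℝ) < n * d := by positivity
  constructor
  · rintro ⟨l, ⟨hl_nonneg, hl_sum⟩, rfl⟩
    refine ⟨fun i => ?_, ?_⟩
    · simpa [ones] using mul_nonneg hnd.le (hl_nonneg i)
    · simp [ones, sum_add_distrib, ← mul_sum, hl_sum]
  · rintro ⟨hle, hsum⟩
    refine ⟨(1 / ((n : ℝ) * d)) • (y - x + d • ones n), ⟨fun i => ?_, ?_⟩, ?_⟩
    · have : 0 ≤ y i - x i + d := by linarith [hle i]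
      simp only [ones, PiLp.smul_apply, PiLp.add_apply, PiLp.sub_apply, smul_eq_mul, mul_one]
      exact mul_nonneg (one_div_pos.mpr hnd).le this
    · simp only [ones, PiLp.smul_apply, PiLp.add_apply, PiLp.sub_apply, smul_eq_mul,
        ← mul_sum, sum_add_distrib, sum_sub_distrib, hsum, sub_self, sum_const, card_univ,
        Fintype.card_fin, nsmul_eq_mul, mul_one, zero_add]
      field_simp
    · ext i
      simp only [ones, PiLp.add_apply, PiLp.sub_apply, PiLp.smul_apply, smul_eq_mul]
      field_simp
      ring

theorem mem_simplexBall_of_dist_le (n : ℕ) (x : Euc n) (hx : x ∈ unitSimplex n)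
    (d : ℝ) (hd : 0 < d) (y : Euc n) (hy : y ∈ unitSimplex n)
    (hdist : ‖x - y‖ ≤ d) : y ∈ simplexBall n x d := by
  refine (mem_simplexBall_iff (pos_of_mem_unitSimplex hx) hd).mpr ⟨fun i => ?_, ?_⟩
  · have hcoord : |x i - y i| ≤ ‖x - y‖ := by
      simpa [Real.norm_eq_abs] using PiLp.norm_apply_le (x - y) i
    linarith [le_abs_self (x i - y i)]
  · rw [hx.2, hy.2]
end
end

section
/- For x ∈ S_n and d > 0, the Euclidean ball B(x,d) intersected with S_n is contained in S(x,d), and S(x,d) is contained in the Euclidean ball B(x, n·d). Consequently, for any c ∈ ℝ^n, any minimizer y* of ⟨c,·⟩ over S(x,d) ∩ S_n satisfies ⟨c, y⟩ ≥ ⟨c, y*⟩ for all y ∈ B(x,d) ∩ S_n, and ‖x − y*‖₂ ≤ n·d. -/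
open InnerProductSpace Finset

noncomputable section

/-!
A point `y` of the simplex with `‖y - x‖ ≤ d` differs from `x` by at most `d` in every coordinate,
so `λ = (y - x + d𝟙) / (n d)` is nonnegative, and it sums to `(1 - 1 + n d) / (n d) = 1`.
Conversely `(x - d𝟙 + n d λ) - x = d (n λ - 𝟙)`, and for `λ` in the simplex
`‖n λ - 𝟙‖² = n² ‖λ‖² - 2n ⟪λ, 𝟙⟫ + n = n² ‖λ‖² - n ≤ n²` because `‖λ‖ ≤ 1`.
The statement about minimizers then only uses `B(x,d) ∩ S_n ⊆ S(x,d) ∩ S_n`.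
-/

@[simp]
lemma ones_apply (n : ℕ) (i : Fin n) : ones n i = 1 := rfl

lemma real_inner_ones_right {n : ℕ} (v : Euc n) : ⟪v, ones n⟫_ℝ = ∑ i, v i := by
  simp [PiLp.inner_apply]

lemma norm_ones_sq (n : ℕ) : ‖ones n‖ ^ 2 = n := by
  simp [EuclideanSpace.real_norm_sq_eq]

lemma norm_le_one_of_mem_unitSimplex {n : ℕ} {l : Euc n} (hl : l ∈ unitSimplex n) :
    ‖l‖ ≤ 1 := by
  have hle : ∀ i, l i ≤ 1 := fun i => hl.2 ▸ single_le_sum (fun j _ => hl.1 j) (mem_univ i)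
  have hsq : ‖l‖ ^ 2 ≤ 1 := by
    rw [EuclideanSpace.real_norm_sq_eq, ← hl.2]
    exact sum_le_sum fun i _ => by nlinarith [hl.1 i, hle i]
  exact (sq_le_one_iff₀ (norm_nonneg l)).mp hsq

lemma norm_natCast_smul_sub_ones_le {n : ℕ} {l : Euc n} (hl : l ∈ unitSimplex n) :
    ‖(n : ℝ) • l - ones n‖ ≤ n := by
  have hl1 := norm_le_one_of_mem_unitSimplex hl
  have hsq : ‖(n : ℝ) • l - ones n‖ ^ 2 = (n : ℝ) ^ 2 * ‖l‖ ^ 2 - n := by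
    rw [norm_sub_sq_real, norm_smul, real_inner_smul_left, real_inner_ones_right, hl.2,
      norm_ones_sq, Real.norm_natCast]
    ring
  refine abs_le_of_sq_le_sq' ?_ (Nat.cast_nonneg n) |>.2
  rw [hsq]
  have hl2 : ‖l‖ ^ 2 ≤ 1 := pow_le_one₀ (norm_nonneg l) hl1
  nlinarith [mul_le_mul_of_nonneg_left hl2 (sq_nonneg (n : ℝ))]

lemma simplexBall_subset_closedBall (n : ℕ) (x : Euc n) {d : ℝ} (hd : 0 ≤ d) :
    simplexBall n x d ⊆ Metric.closedBall x ((n : ℝ) * d) := by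
  rintro y ⟨l, hl, rfl⟩
  have hdiff : (x - d • ones n) + ((n : ℝ) * d) • l - x = d • ((n : ℝ) • l - ones n) := by
    rw [smul_sub, smul_smul, mul_comm]
    abel
  rw [Metric.mem_closedBall, dist_eq_norm, hdiff, norm_smul, Real.norm_of_nonneg hd, mul_comm]
  exact mul_le_mul_of_nonneg_right (norm_natCast_smul_sub_ones_le hl) hd

lemma closedBall_inter_unitSimplex_subset_simplexBall {n : ℕ} {x : Euc n}
    (hx : x ∈ unitSimplex n) {d : ℝ} (hd : 0 < d) :
    Metric.closedBall x d ∩ unitSimplex n ⊆ simplexBall n x d := by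
  rintro y ⟨hyx, hy⟩
  have hnd : 0 < (n : ℝ) * d := mul_pos (Nat.cast_pos.mpr (pos_of_mem_unitSimplex hx)) hd
  have hcoord : ∀ i, (((n : ℝ) * d)⁻¹ • (y - x + d • ones n)) i
      = ((n : ℝ) * d)⁻¹ * (y i - x i + d) := fun i => by simp; ring
  refine ⟨((n : ℝ) * d)⁻¹ • (y - x + d • ones n), ⟨fun i => ?_, ?_⟩, ?_⟩
  · have hyxi : |y i - x i| ≤ d :=
      (PiLp.dist_apply_le y x i).trans (Metric.mem_closedBall.mp hyx)
    rw [hcoord]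
    exact mul_nonneg (inv_nonneg.mpr hnd.le) (by linarith [neg_abs_le (y i - x i)])
  · simp only [hcoord, ← mul_sum, sum_add_distrib, sum_sub_distrib, hy.2, hx.2, sum_const,
      card_univ, Fintype.card_fin, nsmul_eq_mul]
    rw [sub_self, zero_add, inv_mul_cancel₀ hnd.ne']
  · rw [smul_smul, mul_inv_cancel₀ hnd.ne', one_smul]
    abel

theorem slmo_is_lloo (n : ℕ) (x : Euc n) (hx : x ∈ unitSimplex n) (d : ℝ) (hd : 0 < d) :
    (Metric.closedBall x d ∩ unitSimplex n ⊆ simplexBall n x d) ∧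
    (simplexBall n x d ⊆ Metric.closedBall x ((n : ℝ) * d)) ∧
    ∀ c : Euc n, ∀ ystar ∈ simplexBall n x d ∩ unitSimplex n,
      (∀ z ∈ simplexBall n x d ∩ unitSimplex n, ⟪c, ystar⟫_ℝ ≤ ⟪c, z⟫_ℝ) →
      (∀ y ∈ Metric.closedBall x d ∩ unitSimplex n, ⟪c, ystar⟫_ℝ ≤ ⟪c, y⟫_ℝ) ∧
        ‖x - ystar‖ ≤ (n : ℝ) * d := by
  have hball := closedBall_inter_unitSimplex_subset_simplexBall hx hd
  have hsimplex := simplexBall_subset_closedBall n x hd.le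
  refine ⟨hball, hsimplex, fun c ystar hystar hmin => ⟨fun y hy => hmin y ⟨hball hy, hy.2⟩, ?_⟩⟩
  rw [← dist_eq_norm, ← Metric.mem_closedBall']
  exact hsimplex hystar.1
end
end

section
/- Let P = Conv{v₁,…,v_N} ⊆ ℝ^n, x ∈ P, d > 0, and let λ, λ′ ∈ S_N both satisfy x = ∑_i λ_i v_i = ∑_i λ′_i v_i. Then for any μ ∈ S(λ, d) there exists μ′ ∈ S(λ′, d) with ∑_i μ_i v_i = ∑_i μ′_i v_i. Consequently, the generalized simplex ball S_P(x,d) := {∑_i μ_i v_i : μ ∈ S(λ_x, d)} is independent of the choice of convex representation λ_x of x. -/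
open InnerProductSpace Finset

noncomputable section

/- Shifting by `l' - l` maps `S(l, d)` onto `S(l', d)` and, because `l` and `l'` represent the
same point, leaves `∑ i, m i • v i` unchanged. -/

lemma sub_add_mem_simplexBall {N : ℕ} {l l' m : Euc N} {d : ℝ} (hm : m ∈ simplexBall N l d) :
    m - l + l' ∈ simplexBall N l' d := by
  obtain ⟨ν, hν, rfl⟩ := hm
  exact ⟨ν, hν, by abel⟩

lemma sum_sub_add_smul {N : ℕ} {M : Type*} [AddCommGroup M] [Module ℝ M] (v : Fin N → M)
    (m l l' : Euc N) :
    ∑ i, (m - l + l') i • v i = ∑ i, m i • v i - ∑ i, l i • v i + ∑ i, l' i • v i := by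
  simp only [PiLp.add_apply, PiLp.sub_apply, add_smul, sub_smul, sum_add_distrib,
    sum_sub_distrib]

lemma exists_mem_simplexBall_sum_smul_eq {N : ℕ} {M : Type*} [AddCommGroup M] [Module ℝ M]
    (v : Fin N → M) {l l' : Euc N} (d : ℝ) (h : ∑ i, l i • v i = ∑ i, l' i • v i)
    {m : Euc N} (hm : m ∈ simplexBall N l d) :
    ∃ m' ∈ simplexBall N l' d, ∑ i, m i • v i = ∑ i, m' i • v i :=
  ⟨m - l + l', sub_add_mem_simplexBall hm, by rw [sum_sub_add_smul, h, sub_add_cancel]⟩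

theorem generalized_simplexBall_well_defined_general (n N : ℕ) (v : Fin N → Euc n)
    (x : Euc n) (d : ℝ)
    (l l' : Euc N)
    (hx : x = ∑ i, l i • v i) (hx' : x = ∑ i, l' i • v i) :
    (∀ m ∈ simplexBall N l d, ∃ m' ∈ simplexBall N l' d,
        ∑ i, m i • v i = ∑ i, m' i • v i) ∧
    {z : Euc n | ∃ m ∈ simplexBall N l d, z = ∑ i, m i • v i} =
      {z : Euc n | ∃ m' ∈ simplexBall N l' d, z = ∑ i, m' i • v i} := by
  have transfer := fun m (hm : m ∈ simplexBall N l d) =>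
    exists_mem_simplexBall_sum_smul_eq v d (hx.symm.trans hx') hm
  refine ⟨transfer, Set.Subset.antisymm ?_ ?_⟩
  · rintro z ⟨m, hm, rfl⟩
    exact transfer m hm
  · rintro z ⟨m, hm, rfl⟩
    exact exists_mem_simplexBall_sum_smul_eq v d (hx'.symm.trans hx) hm

theorem generalized_simplexBall_well_defined (n N : ℕ) (v : Fin N → Euc n)
    (x : Euc n) (d : ℝ) (hd : 0 < d)
    (l l' : Euc N) (hl : l ∈ unitSimplex N) (hl' : l' ∈ unitSimplex N)
    (hx : x = ∑ i, l i • v i) (hx' : x = ∑ i, l' i • v i) :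
    (∀ m ∈ simplexBall N l d, ∃ m' ∈ simplexBall N l' d,
        ∑ i, m i • v i = ∑ i, m' i • v i) ∧
    {z : Euc n | ∃ m ∈ simplexBall N l d, z = ∑ i, m i • v i} =
      {z : Euc n | ∃ m' ∈ simplexBall N l' d, z = ∑ i, m' i • v i} :=
  generalized_simplexBall_well_defined_general n N v x d l l' hx hx'
end
end
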